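/- Every finite dimensional subspace W of a PN space (V, ν, τ, τ*), where τ* is Archimedean and ν_p ≠ ε_∞ for every p ∈ V (so V is a strong TVS), is strongly complete: every strongly Cauchy sequence in W strongly converges to a point of W. In particular, every finite dimensional such PN space is complete. -/

import Mathlib

open Filter Topology

noncomputable section

/-- A distance distribution function: nondecreasing, left-continuous,
vanishing on `(-∞,0]`, bounded by `1`. -/
def DDF (F : ℝ → ℝ) : Prop :=
  Monotone F ∧ (∀ x ≤ 0, F x = 0) ∧ (∀ x, F x ≤ 1) ∧
    ∀ x, Tendsto F (nhdsWithin x (Set.Iio x)) (nhds (F x))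

/-- The unit step at `0`. -/
def eps0 : ℝ → ℝ := fun x => if x ≤ 0 then 0 else 1

/-- The unit step at `c`. -/
def epsc (c : ℝ) : ℝ → ℝ := fun x => if x ≤ c then 0 else 1

/-- `ε∞`: identically 0 on `ℝ` (value 1 only at `+∞`). -/
def epsInf : ℝ → ℝ := fun _ => 0

/-- Membership in `D⁺`: the distribution function tends to `1` at `+∞`. -/
def InDPlus (F : ℝ → ℝ) : Prop := Tendsto F atTop (nhds 1)

/-- Weak convergence of distribution functions. -/
def WeakConv (Fn : ℕ → ℝ → ℝ) (F : ℝ → ℝ) : Prop :=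
  ∀ x, ContinuousAt F x → Tendsto (fun n => Fn n x) atTop (nhds (F x))

/-- A continuous triangle function on `Δ⁺`. -/
def IsTriangleFunction (τ : (ℝ → ℝ) → (ℝ → ℝ) → (ℝ → ℝ)) : Prop :=
  (∀ F G, DDF F → DDF G → DDF (τ F G)) ∧
  (∀ F G H, DDF F → DDF G → DDF H → τ (τ F G) H = τ F (τ G H)) ∧
  (∀ F G, DDF F → DDF G → τ F G = τ G F) ∧
  (∀ F G H, DDF F → DDF G → DDF H → F ≤ G → τ F H ≤ τ G H) ∧
  (∀ F, DDF F → τ F eps0 = F) ∧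
  (∀ (Fn : ℕ → ℝ → ℝ) F G, (∀ n, DDF (Fn n)) → DDF F → DDF G →
    WeakConv Fn F → WeakConv (fun n => τ (Fn n) G) (τ F G))

/-- A probabilistic normed space `(V, ν, τ, τ*)`. -/
structure IsPNSpace (V : Type) [AddCommGroup V] [Module ℝ V]
    (ν : V → ℝ → ℝ) (τ τs : (ℝ → ℝ) → (ℝ → ℝ) → (ℝ → ℝ)) : Prop where
  ddf : ∀ p, DDF (ν p)
  tri : IsTriangleFunction τ
  tris : IsTriangleFunction τs
  tle : ∀ F G, DDF F → DDF G → τ F G ≤ τs F G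
  n1 : ∀ p, ν p = eps0 ↔ p = 0
  n2 : ∀ p, ν (-p) = ν p
  n3 : ∀ p q, τ (ν p) (ν q) ≤ ν (p + q)
  n4 : ∀ (p : V) (l : ℝ), 0 ≤ l → l ≤ 1 →
    ν p ≤ τs (ν (l • p)) (ν ((1 - l) • p))

/-- Archimedean triangle function: no idempotents besides `ε₀` and `ε∞`. -/
def IsArchimedean (τ : (ℝ → ℝ) → (ℝ → ℝ) → (ℝ → ℝ)) : Prop :=
  ∀ F, DDF F → τ F F = F → F = eps0 ∨ F = epsInf

/-- Strong convergence of a sequence in a PN space. -/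
def StrongConv {V : Type} [AddCommGroup V] (ν : V → ℝ → ℝ)
    (q : ℕ → V) (p : V) : Prop :=
  ∀ l : ℝ, 0 < l → ∀ᶠ n in atTop, ν (q n - p) l > 1 - l

/-- Strongly Cauchy sequence in a PN space. -/
def StrongCauchy {V : Type} [AddCommGroup V] (ν : V → ℝ → ℝ) (q : ℕ → V) : Prop :=
  ∀ l : ℝ, 0 < l → ∃ N, ∀ m n, N ≤ m → N ≤ n → ν (q m - q n) l > 1 - l

/-- `A` is `D`-bounded: some `G ∈ D⁺` lies below all `ν p`, `p ∈ A`. -/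
def DBounded {V : Type} (ν : V → ℝ → ℝ) (A : Set V) : Prop :=
  ∃ G : ℝ → ℝ, DDF G ∧ InDPlus G ∧ ∀ p ∈ A, G ≤ ν p

/-- `A` is `D`-compact: every sequence in `A` has a subsequence strongly
convergent to a point of `A`. -/
def DCompact {V : Type} [AddCommGroup V] (ν : V → ℝ → ℝ) (A : Set V) : Prop :=
  ∀ q : ℕ → V, (∀ n, q n ∈ A) → ∃ φ : ℕ → ℕ, StrictMono φ ∧
    ∃ p ∈ A, StrongConv ν (q ∘ φ) p

/-- `A` is closed under strong convergence of sequences. -/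
def SeqClosed {V : Type} [AddCommGroup V] (ν : V → ℝ → ℝ) (A : Set V) : Prop :=
  ∀ (q : ℕ → V) (p : V), (∀ n, q n ∈ A) → StrongConv ν q p → p ∈ A

/-- The probabilistic radius `R_A(x) = l⁻ inf {ν p x : p ∈ A}`. -/
def probRadius {V : Type} (ν : V → ℝ → ℝ) (A : Set V) (x : ℝ) : ℝ :=
  ⨆ y : Set.Iio x, ⨅ p : A, ν (p : V) (y : ℝ)

open Set

/-! The strong neighbourhoods `N_0(λ)` form a basis at `0` of a Hausdorff vector space topology
on `V`. Addition is continuous because a triangle function is continuous at `ε₀`, which is tested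
on step functions lying below every `F` close to `ε₀`. For `t • p → 0` as `t → 0`, the limit
`G = ⨆ₙ ν (2⁻ⁿ • p)` satisfies `τ* G G = G` by (N4) with `λ = 1/2`, so `G = ε₀` since `τ*` is
Archimedean and `G ≥ ν p ≠ ε∞`. A finite dimensional subspace of a Hausdorff topological vector
space is complete, and strongly Cauchy sequences are Cauchy for its uniformity. -/

def strongBall {V : Type} (ν : V → ℝ → ℝ) (l : ℝ) : Set V := {p | 1 - l < ν p l}

def stepBelow (η : ℝ) : ℝ → ℝ := fun x => if x ≤ η then 0 else 1 - η

namespace DDF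

variable {F : ℝ → ℝ}

lemma nonneg (hF : DDF F) (x : ℝ) : 0 ≤ F x := by
  rcases le_or_gt x 0 with hx | hx
  · rw [hF.2.1 x hx]
  · simpa [hF.2.1 0 le_rfl] using hF.1 hx.le

lemma le_eps0 (hF : DDF F) : F ≤ eps0 := by
  intro x
  by_cases hx : x ≤ 0
  · simp [eps0, hx, hF.2.1 x hx]
  · simpa [eps0, hx] using hF.2.2.1 x

lemma eq_eps0_of_forall_one_sub_lt (hF : DDF F) (hlt : ∀ l, 0 < l → 1 - l < F l) :
    F = eps0 := by
  refine le_antisymm hF.le_eps0 fun x => ?_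
  by_cases hx : x ≤ 0
  · simp [eps0, hx, hF.2.1 x hx]
  · simp only [eps0, hx, if_false]
    refine le_of_forall_pos_lt_add fun ε hε => ?_
    have hmin := hlt (min ε x) (lt_min hε (not_le.1 hx))
    have := hF.1 (min_le_right ε x)
    linarith [min_le_left ε x]

lemma iSup {ι : Sort*} [Nonempty ι] {F : ι → ℝ → ℝ} (hF : ∀ i, DDF (F i)) :
    DDF fun x => ⨆ i, F i x := by
  have hbdd : ∀ x, BddAbove (range fun i => F i x) :=
    fun x => ⟨1, by rintro _ ⟨i, rfl⟩; exact (hF i).2.2.1 x⟩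
  have hmono : Monotone fun x => ⨆ i, F i x := fun a b hab =>
    ciSup_mono (hbdd b) fun i => (hF i).1 hab
  refine ⟨hmono, fun x hx => by simp [(hF _).2.1 x hx], fun x => ciSup_le fun i => (hF i).2.2.1 x,
    fun x => ?_⟩
  convert hmono.tendsto_nhdsLT x using 2
  have himg : BddAbove ((fun x => ⨆ i, F i x) '' Iio x) :=
    ⟨1, by rintro _ ⟨y, -, rfl⟩; exact ciSup_le fun i => (hF i).2.2.1 y⟩
  refine le_antisymm (ciSup_le fun i => ?_) (csSup_le (nonempty_Iio.image _) ?_)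
  · rw [tendsto_nhds_unique ((hF i).2.2.2 x) ((hF i).1.tendsto_nhdsLT x)]
    refine csSup_le (nonempty_Iio.image _) ?_
    rintro _ ⟨y, hy, rfl⟩
    exact (le_ciSup (hbdd y) i).trans (le_csSup himg ⟨y, hy, rfl⟩)
  · rintro _ ⟨y, hy, rfl⟩
    exact hmono hy.le

end DDF

section StepBelow

variable {η : ℝ}

lemma ddf_stepBelow (h0 : 0 ≤ η) (h1 : η ≤ 1) : DDF (stepBelow η) := by
  refine ⟨fun a b hab => ?_, fun x hx => by simp [stepBelow, hx.trans h0],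
    fun x => by unfold stepBelow; split_ifs <;> linarith, fun x => ?_⟩
  · unfold stepBelow
    split_ifs <;> linarith
  · refine tendsto_const_nhds.congr' ?_
    rcases le_or_gt x η with hx | hx
    · filter_upwards [self_mem_nhdsWithin] with y (hy : y < x)
      simp [stepBelow, hy.le.trans hx, hx]
    · filter_upwards [Ioo_mem_nhdsLT hx] with y hy
      simp [stepBelow, not_le.2 hy.1, not_le.2 hx]

lemma ddf_eps0 : DDF eps0 := by
  convert ddf_stepBelow le_rfl zero_le_one using 1
  funext x
  simp [eps0, stepBelow]

lemma stepBelow_le {F : ℝ → ℝ} (hF : DDF F) (hη : 1 - η < F η) : stepBelow η ≤ F := by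
  intro x
  unfold stepBelow
  split_ifs with hx
  · exact hF.nonneg x
  · exact hη.le.trans (hF.1 (not_le.1 hx).le)

lemma stepBelow_le_stepBelow {η' : ℝ} (h1 : η ≤ 1) (hη : η ≤ η') : stepBelow η' ≤ stepBelow η := by
  intro x
  unfold stepBelow
  split_ifs <;> linarith

lemma not_continuousAt_eps0 : ¬ ContinuousAt eps0 0 := by
  intro hcont
  have hright : Tendsto eps0 (𝓝[>] 0) (𝓝 1) := by
    refine tendsto_const_nhds.congr' ?_
    filter_upwards [self_mem_nhdsWithin] with y (hy : (0 : ℝ) < y)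
    simp [eps0, not_le.2 hy]
  have hzero : Tendsto eps0 (𝓝[>] 0) (𝓝 0) := by
    simpa [eps0] using hcont.tendsto.mono_left nhdsWithin_le_nhds
  exact one_ne_zero (tendsto_nhds_unique hright hzero)

lemma weakConv_stepBelow_eps0 {η : ℕ → ℝ} (hpos : ∀ n, 0 < η n)
    (hto : Tendsto η atTop (𝓝 0)) : WeakConv (fun n => stepBelow (η n)) eps0 := by
  intro x hx
  rcases lt_trichotomy x 0 with hneg | rfl | hposx
  · simp [stepBelow, eps0, hneg.le, hneg.le.trans (hpos _).le]
  · exact absurd hx not_continuousAt_eps0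
  · have hlim : Tendsto (fun n => 1 - η n) atTop (𝓝 (eps0 x)) := by
      simpa [eps0, not_le.2 hposx] using tendsto_const_nhds.sub hto
    refine hlim.congr' ?_
    filter_upwards [hto.eventually (eventually_lt_nhds hposx)] with n hn
    simp [stepBelow, not_le.2 hn]

end StepBelow

namespace IsTriangleFunction

variable {τ : (ℝ → ℝ) → (ℝ → ℝ) → (ℝ → ℝ)} {F F' G G' : ℝ → ℝ}

lemma mono (ht : IsTriangleFunction τ) (hF : DDF F) (hF' : DDF F') (hG : DDF G) (hG' : DDF G')
    (hFF' : F ≤ F') (hGG' : G ≤ G') : τ F G ≤ τ F' G' :=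
  calc τ F G ≤ τ F' G := ht.2.2.2.1 F F' G hF hF' hG hFF'
    _ = τ G F' := ht.2.2.1 F' G hF' hG
    _ ≤ τ G' F' := ht.2.2.2.1 G G' F' hG hG' hF' hGG'
    _ = τ F' G' := ht.2.2.1 G' F' hG' hF'

lemma le_left (ht : IsTriangleFunction τ) (hF : DDF F) (hG : DDF G) : τ F G ≤ F :=
  calc τ F G ≤ τ F eps0 := ht.mono hF hF hG ddf_eps0 le_rfl hG.le_eps0
    _ = F := ht.2.2.2.2.1 F hF

lemma exists_forall_one_sub_lt (ht : IsTriangleFunction τ) {l : ℝ} (hl : 0 < l) :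
    ∃ η, 0 < η ∧ ∀ F G, DDF F → DDF G → 1 - η < F η → 1 - η < G η → 1 - l < τ F G l := by
  set δ := min l 1 / 2 with hδ
  have hδ0 : 0 < δ := half_pos (lt_min hl one_pos)
  have hδl : δ < l := (half_lt_self (lt_min hl one_pos)).trans_le (min_le_left _ _)
  have hδ1 : δ ≤ 1 := by linarith [min_le_right l 1, hδ]
  set η : ℕ → ℝ := fun n => δ / ((n + 1 : ℕ) : ℝ)
  have hηpos : ∀ n, 0 < η n := fun n => by positivity
  have hηδ : ∀ n, η n ≤ δ := fun n => div_le_self hδ0.le (by simp)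
  have hstep : ∀ n, DDF (stepBelow (η n)) :=
    fun n => ddf_stepBelow (hηpos n).le ((hηδ n).trans hδ1)
  have hstepδ : DDF (stepBelow δ) := ddf_stepBelow hδ0.le hδ1
  have hτ : WeakConv (fun n => τ (stepBelow (η n)) (stepBelow δ)) (τ eps0 (stepBelow δ)) :=
    ht.2.2.2.2.2 _ _ _ hstep ddf_eps0 hstepδ <| weakConv_stepBelow_eps0 hηpos <|
      (tendsto_const_div_atTop_nhds_zero_nat δ).comp (tendsto_add_atTop_nat 1)
  rw [ht.2.2.1 _ _ ddf_eps0 hstepδ, ht.2.2.2.2.1 _ hstepδ] at hτ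
  have hconst : ∀ᶠ x in 𝓝 l, stepBelow δ x = 1 - δ := by
    filter_upwards [eventually_gt_nhds hδl] with x hx
    simp [stepBelow, not_le.2 hx]
  have hlim := hτ l (continuousAt_const.congr (hconst.mono fun _ h => h.symm))
  rw [hconst.self_of_nhds] at hlim
  obtain ⟨n, hn⟩ := (hlim.eventually (eventually_gt_nhds (by linarith : 1 - l < 1 - δ))).exists
  refine ⟨η n, hηpos n, fun F G hF hG hFη hGη => hn.trans_le ?_⟩
  refine ht.mono (hstep n) hF hstepδ hG (stepBelow_le hF hFη) ?_ l
  exact (stepBelow_le_stepBelow ((hηδ n).trans hδ1) (hηδ n)).trans (stepBelow_le hG hGη)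

end IsTriangleFunction

namespace IsPNSpace

variable {V : Type} [AddCommGroup V] [Module ℝ V] {ν : V → ℝ → ℝ}
  {τ τs : (ℝ → ℝ) → (ℝ → ℝ) → (ℝ → ℝ)}

lemma strongBall_mono (h : IsPNSpace V ν τ τs) {l l' : ℝ} (hll' : l ≤ l') :
    strongBall ν l ⊆ strongBall ν l' := fun p (hp : 1 - l < ν p l) =>
  show 1 - l' < ν p l' by linarith [(h.ddf p).1 hll']

lemma zero_mem_strongBall (h : IsPNSpace V ν τ τs) {l : ℝ} (hl : 0 < l) :
    (0 : V) ∈ strongBall ν l := by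
  show 1 - l < ν 0 l
  simp [(h.n1 0).2 rfl, eps0, not_le.2 hl, hl]

lemma exists_add_mem_strongBall (h : IsPNSpace V ν τ τs) {l : ℝ} (hl : 0 < l) :
    ∃ η, 0 < η ∧ ∀ p ∈ strongBall ν η, ∀ q ∈ strongBall ν η, p + q ∈ strongBall ν l := by
  obtain ⟨η, hη, hτ⟩ := h.tri.exists_forall_one_sub_lt hl
  exact ⟨η, hη, fun p hp q hq => (hτ _ _ (h.ddf p) (h.ddf q) hp hq).trans_le (h.n3 p q l)⟩

lemma le_nu_smul (h : IsPNSpace V ν τ τs) (p : V) {t : ℝ} (ht : |t| ≤ 1) : ν p ≤ ν (t • p) := by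
  have habs : ν (t • p) = ν (|t| • p) := by
    rcases abs_choice t with ht' | ht' <;> rw [ht']
    rw [neg_smul, h.n2]
  rw [habs]
  exact (h.n4 p |t| (abs_nonneg t) ht).trans (h.tris.le_left (h.ddf _) (h.ddf _))

lemma smul_mem_strongBall (h : IsPNSpace V ν τ τs) {p : V} {l t : ℝ} (hp : p ∈ strongBall ν l)
    (ht : |t| ≤ 1) : t • p ∈ strongBall ν l :=
  lt_of_lt_of_le hp (h.le_nu_smul p ht l)

lemma exists_natCast_smul_mem_strongBall (h : IsPNSpace V ν τ τs) (n : ℕ) {l : ℝ} (hl : 0 < l) :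
    ∃ μ, 0 < μ ∧ ∀ p ∈ strongBall ν μ, (n : ℝ) • p ∈ strongBall ν l := by
  induction n generalizing l with
  | zero => exact ⟨l, hl, fun p _ => by simpa using h.zero_mem_strongBall hl⟩
  | succ n ih =>
    obtain ⟨η, hη, hadd⟩ := h.exists_add_mem_strongBall hl
    obtain ⟨μ, hμ, hμη⟩ := ih hη
    refine ⟨min μ η, lt_min hμ hη, fun p hp => ?_⟩
    rw [Nat.cast_succ, add_smul, one_smul]
    exact hadd _ (hμη p (h.strongBall_mono (min_le_left μ η) hp))
      p (h.strongBall_mono (min_le_right μ η) hp)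

lemma exists_smul_mem_strongBall (h : IsPNSpace V ν τ τs) (c : ℝ) {l : ℝ} (hl : 0 < l) :
    ∃ μ, 0 < μ ∧ ∀ p ∈ strongBall ν μ, c • p ∈ strongBall ν l := by
  obtain ⟨μ, hμ, hn⟩ := h.exists_natCast_smul_mem_strongBall (⌈|c|⌉₊ + 1) hl
  refine ⟨μ, hμ, fun p hp => ?_⟩
  have hn0 : (0 : ℝ) < (⌈|c|⌉₊ + 1 : ℕ) := by positivity
  have hc : |c / (⌈|c|⌉₊ + 1 : ℕ)| ≤ 1 := by
    rw [abs_div, abs_of_pos hn0, div_le_one hn0]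
    push_cast
    linarith [Nat.le_ceil |c|]
  have := hn _ (h.smul_mem_strongBall hp hc)
  rwa [smul_smul, mul_div_cancel₀ _ hn0.ne'] at this

lemma iSup_nu_half_pow_smul (h : IsPNSpace V ν τ τs) (harch : IsArchimedean τs)
    (hne : ∀ p : V, ν p ≠ epsInf) (p : V) :
    (fun x => ⨆ n : ℕ, ν ((1 / 2 : ℝ) ^ n • p) x) = eps0 := by
  set G := fun x => ⨆ n : ℕ, ν ((1 / 2 : ℝ) ^ n • p) x
  have hG : DDF G := DDF.iSup fun n => h.ddf _
  have hle : ∀ n, ν ((1 / 2 : ℝ) ^ n • p) ≤ G := fun n x =>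
    le_ciSup (f := fun m : ℕ => ν ((1 / 2 : ℝ) ^ m • p) x)
      ⟨1, by rintro _ ⟨m, rfl⟩; exact (h.ddf _).2.2.1 x⟩ n
  have hidem : τs G G = G := by
    refine le_antisymm (h.tris.le_left hG hG) fun x => ciSup_le fun n => ?_
    have hhalf := h.n4 ((1 / 2 : ℝ) ^ n • p) (1 / 2) (by norm_num) (by norm_num)
    rw [show (1 : ℝ) - 1 / 2 = 1 / 2 by norm_num, smul_smul, ← pow_succ'] at hhalf
    exact (hhalf.trans (h.tris.mono (h.ddf _) hG (h.ddf _) hG (hle _) (hle _))) x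
  refine (harch G hG hidem).resolve_right fun hGinf => hne p ?_
  funext x
  have := hle 0 x
  simp only [pow_zero, one_smul, hGinf, epsInf] at this ⊢
  exact le_antisymm this ((h.ddf p).nonneg x)

lemma eventually_smul_mem_strongBall (h : IsPNSpace V ν τ τs) (harch : IsArchimedean τs)
    (hne : ∀ p : V, ν p ≠ epsInf) (p : V) {l : ℝ} (hl : 0 < l) :
    ∀ᶠ t in 𝓝 (0 : ℝ), t • p ∈ strongBall ν l := by
  have hG : 1 - l < ⨆ n : ℕ, ν ((1 / 2 : ℝ) ^ n • p) l := by
    rw [congrFun (h.iSup_nu_half_pow_smul harch hne p) l]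
    simp [eps0, not_le.2 hl, hl]
  obtain ⟨n, hn⟩ := exists_lt_of_lt_ciSup hG
  have hpow : (0 : ℝ) < (1 / 2) ^ n := by positivity
  filter_upwards [Icc_mem_nhds (neg_lt_zero.2 hpow) hpow] with t ht
  have hscale : |t * 2 ^ n| ≤ 1 := by
    rw [abs_mul, abs_of_pos (by positivity : (0 : ℝ) < 2 ^ n), ← le_div_iff₀ (by positivity)]
    simpa [abs_le] using ht
  simpa [smul_smul, mul_assoc, ← mul_pow] using h.smul_mem_strongBall hn hscale

end IsPNSpace

section StrongTopology

variable {V : Type} [AddCommGroup V] {ν : V → ℝ → ℝ}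

lemma strongConv_iff_tendsto [TopologicalSpace V] [IsTopologicalAddGroup V]
    (hV : (𝓝 (0 : V)).HasBasis (fun l : ℝ => 0 < l) (strongBall ν)) {q : ℕ → V} {p : V} :
    StrongConv ν q p ↔ Tendsto q atTop (𝓝 p) := by
  rw [← tendsto_sub_nhds_zero_iff, hV.tendsto_right_iff]
  rfl

lemma cauchySeq_of_strongCauchy [UniformSpace V] [IsUniformAddGroup V]
    (hV : (𝓝 (0 : V)).HasBasis (fun l : ℝ => 0 < l) (strongBall ν)) {q : ℕ → V}
    (hq : StrongCauchy ν q) : CauchySeq q := by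
  refine hV.uniformity_of_nhds_zero.cauchySeq_iff.2 fun l hl => ?_
  obtain ⟨N, hN⟩ := hq l hl
  exact ⟨N, fun m hm n hn => hN n m hn hm⟩

variable [Module ℝ V] {τ τs : (ℝ → ℝ) → (ℝ → ℝ) → (ℝ → ℝ)}

lemma t2Space_of_hasBasis_strongBall [TopologicalSpace V] [IsTopologicalAddGroup V]
    (h : IsPNSpace V ν τ τs) (hV : (𝓝 (0 : V)).HasBasis (fun l : ℝ => 0 < l) (strongBall ν)) :
    T2Space V :=
  IsTopologicalAddGroup.t2Space_of_zero_sep fun p hp => by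
    by_contra! hmem
    exact hp <| (h.n1 p).1 <| (h.ddf p).eq_eps0_of_forall_one_sub_lt fun l hl =>
      hmem _ (hV.mem_of_mem hl)

def strongModuleFilterBasis (h : IsPNSpace V ν τ τs) (harch : IsArchimedean τs)
    (hne : ∀ p : V, ν p ≠ epsInf) : ModuleFilterBasis ℝ V where
  toAddGroupFilterBasis := addGroupFilterBasisOfComm (strongBall ν '' Ioi 0)
    ⟨_, mem_image_of_mem _ (mem_Ioi.2 one_pos)⟩
    (by
      rintro _ _ ⟨a, ha, rfl⟩ ⟨b, hb, rfl⟩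
      exact ⟨_, mem_image_of_mem _ (mem_Ioi.2 (lt_min ha hb)), subset_inter
        (h.strongBall_mono (min_le_left a b)) (h.strongBall_mono (min_le_right a b))⟩)
    (by
      rintro _ ⟨l, hl, rfl⟩
      exact h.zero_mem_strongBall hl)
    (by
      rintro _ ⟨l, hl, rfl⟩
      obtain ⟨η, hη, hadd⟩ := h.exists_add_mem_strongBall hl
      refine ⟨_, mem_image_of_mem _ (mem_Ioi.2 hη), ?_⟩
      rintro _ ⟨p, hp, q, hq, rfl⟩
      exact hadd p hp q hq)
    (by
      rintro _ ⟨l, hl, rfl⟩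
      refine ⟨_, mem_image_of_mem _ hl, fun p (hp : 1 - l < ν p l) => ?_⟩
      show 1 - l < ν (-p) l
      rwa [h.n2])
  smul' := by
    rintro U (⟨l, hl, rfl⟩ : U ∈ strongBall ν '' Ioi 0)
    refine ⟨Icc (-1) 1, Icc_mem_nhds (by norm_num) (by norm_num), _, mem_image_of_mem _ hl, ?_⟩
    rintro _ ⟨t, ht, p, hp, rfl⟩
    exact h.smul_mem_strongBall hp (abs_le.2 ht)
  smul_left' := by
    rintro c U (⟨l, hl, rfl⟩ : U ∈ strongBall ν '' Ioi 0)
    obtain ⟨μ, hμ, hc⟩ := h.exists_smul_mem_strongBall c hl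
    exact ⟨_, mem_image_of_mem _ (mem_Ioi.2 hμ), hc⟩
  smul_right' := by
    rintro p U (⟨l, hl, rfl⟩ : U ∈ strongBall ν '' Ioi 0)
    exact h.eventually_smul_mem_strongBall harch hne p hl

lemma strongModuleFilterBasis_nhds_zero_hasBasis (h : IsPNSpace V ν τ τs)
    (harch : IsArchimedean τs) (hne : ∀ p : V, ν p ≠ epsInf) :
    letI := (strongModuleFilterBasis h harch hne).topology
    (𝓝 (0 : V)).HasBasis (fun l : ℝ => 0 < l) (strongBall ν) :=
  (strongModuleFilterBasis h harch hne).nhds_zero_hasBasis.to_hasBasis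
    (fun _ hU => let ⟨l, hl, hlU⟩ := (hU : _ ∈ strongBall ν '' Ioi 0); ⟨l, hl, hlU.le⟩)
    fun _ hl => ⟨_, mem_image_of_mem _ (mem_Ioi.2 hl), le_rfl⟩

end StrongTopology

/-- Every finite dimensional subspace of a strong-TVS PN space is strongly
complete. -/
theorem statement8 {V : Type} [AddCommGroup V] [Module ℝ V]
    (ν : V → ℝ → ℝ) (τ τs : (ℝ → ℝ) → (ℝ → ℝ) → (ℝ → ℝ))
    (h : IsPNSpace V ν τ τs) (harch : IsArchimedean τs)
    (hne : ∀ p : V, ν p ≠ epsInf)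
    (W : Submodule ℝ V) (hW : FiniteDimensional ℝ W)
    (q : ℕ → V) (hq : ∀ n, q n ∈ W) (hc : StrongCauchy ν q) :
    ∃ p ∈ W, StrongConv ν q p := by
  let B := strongModuleFilterBasis h harch hne
  let _ := B.topology
  have hV := strongModuleFilterBasis_nhds_zero_hasBasis h harch hne
  have := B.isTopologicalAddGroup
  have := B.continuousSMul
  have := t2Space_of_hasBasis_strongBall h hV
  let _ := IsTopologicalAddGroup.rightUniformSpace V
  have := isUniformAddGroup_of_addCommGroup (G := V)
  obtain ⟨p, hpW, hp⟩ := cauchySeq_tendsto_of_isComplete W.complete_of_finiteDimensional hq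
    (cauchySeq_of_strongCauchy hV hc)
  exact ⟨p, hpW, (strongConv_iff_tendsto hV).2 hp⟩

end
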